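/- If a finite-state strategy σ' for Player O implemented by a transducer with n states realizes c(φ) (which in particular requires infinitely many changepoints of p in every outcome), then every outcome consistent with σ' is (n+1)-bounded, i.e., every block of the p-coloring has length at most n+1. -/

import Mathlib

namespace PLDLPaper

/-- Propositional formulas over atomic propositions `P`. -/
inductive PropF (P : Type) where
  | tru : PropF P
  | fls : PropF P
  | atom : P → PropF P
  | natom : P → PropF P
  | conj : PropF P → PropF P → PropF P
  | disj : PropF P → PropF P → PropF P

def PropF.eval {P : Type} (A : P → Prop) : PropF P → Prop
  | .tru => True
  | .fls => False
  | .atom p => A p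
  | .natom p => ¬ A p
  | .conj φ ψ => φ.eval A ∧ ψ.eval A
  | .disj φ ψ => φ.eval A ∨ ψ.eval A

mutual
/-- PLDL formulas (in negation normal form) over atomic propositions `P`
and variables `V`, extended with the fresh coloring proposition `p`
(`colp`/`colnp`) and the changepoint-bounded operators of LDL_cp. -/
inductive Frm (P V : Type) where
  | pos : P → Frm P V
  | neg : P → Frm P V
  | colp : Frm P V
  | colnp : Frm P V
  | and : Frm P V → Frm P V → Frm P V
  | or : Frm P V → Frm P V → Frm P V
  | dia : RE P V → Frm P V → Frm P V
  | box : RE P V → Frm P V → Frm P V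
  | diaLe : RE P V → V → Frm P V → Frm P V
  | boxLe : RE P V → V → Frm P V → Frm P V
  | diaCp : RE P V → Frm P V → Frm P V
  | boxCp : RE P V → Frm P V → Frm P V
/-- Regular expressions with tests. -/
inductive RE (P V : Type) where
  | prop : PropF P → RE P V
  | test : Frm P V → RE P V
  | plus : RE P V → RE P V → RE P V
  | comp : RE P V → RE P V → RE P V
  | star : RE P V → RE P V
end

/-- `n` is a changepoint of the color sequence `c`. -/
def Changepoint (c : ℕ → Prop) (n : ℕ) : Prop :=
  n = 0 ∨ ¬ (c (n - 1) ↔ c n)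

/-- The infix at positions `n, …, n + j - 1` contains at most one changepoint. -/
def AtMostOneCP (c : ℕ → Prop) (n j : ℕ) : Prop :=
  ∀ m₁ m₂, n ≤ m₁ → m₁ < n + j → n ≤ m₂ → m₂ < n + j →
    Changepoint c m₁ → Changepoint c m₂ → m₁ = m₂

mutual
/-- Satisfaction `(w, n, α) ⊨ φ`; the color of position `n` (truth value of the
fresh proposition `p`) is `c n`. -/
def Sat {P V : Type} (w : ℕ → P → Prop) (c : ℕ → Prop) (α : V → ℕ) :
    Frm P V → ℕ → Prop
  | .pos p, n => w n p
  | .neg p, n => ¬ w n p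
  | .colp, n => c n
  | .colnp, n => ¬ c n
  | .and φ ψ, n => Sat w c α φ n ∧ Sat w c α ψ n
  | .or φ ψ, n => Sat w c α φ n ∨ Sat w c α ψ n
  | .dia r ψ, n => ∃ j, Match w c α r n (n + j) ∧ Sat w c α ψ (n + j)
  | .box r ψ, n => ∀ j, Match w c α r n (n + j) → Sat w c α ψ (n + j)
  | .diaLe r z ψ, n => ∃ j, j ≤ α z ∧ Match w c α r n (n + j) ∧ Sat w c α ψ (n + j)
  | .boxLe r z ψ, n => ∀ j, j ≤ α z → Match w c α r n (n + j) → Sat w c α ψ (n + j)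
  | .diaCp r ψ, n => ∃ j, Match w c α r n (n + j) ∧ AtMostOneCP c n j ∧ Sat w c α ψ (n + j)
  | .boxCp r ψ, n => ∀ j, Match w c α r n (n + j) → AtMostOneCP c n j → Sat w c α ψ (n + j)
/-- The match relation `R(r, w, α)`. -/
def Match {P V : Type} (w : ℕ → P → Prop) (c : ℕ → Prop) (α : V → ℕ) :
    RE P V → ℕ → ℕ → Prop
  | .prop φ, m, n => n = m + 1 ∧ φ.eval (w m)
  | .test ψ, m, n => n = m ∧ Sat w c α ψ m
  | .plus r₀ r₁, m, n => Match w c α r₀ m n ∨ Match w c α r₁ m n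
  | .comp r₀ r₁, m, n => ∃ k, Match w c α r₀ m k ∧ Match w c α r₁ k n
  | .star r, m, n => ∃ (k : ℕ) (f : ℕ → ℕ), f 0 = m ∧ f k = n ∧
      ∀ i, i < k → Match w c α r (f i) (f (i + 1))
end

variable {P V : Type}

mutual
/-- Size of a formula. -/
def Frm.size : Frm P V → ℕ
  | .pos _ => 1
  | .neg _ => 1
  | .colp => 1
  | .colnp => 1
  | .and φ ψ => 1 + φ.size + ψ.size
  | .or φ ψ => 1 + φ.size + ψ.size
  | .dia r ψ => 1 + r.size + ψ.size
  | .box r ψ => 1 + r.size + ψ.size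
  | .diaLe r _ ψ => 1 + r.size + ψ.size
  | .boxLe r _ ψ => 1 + r.size + ψ.size
  | .diaCp r ψ => 1 + r.size + ψ.size
  | .boxCp r ψ => 1 + r.size + ψ.size
/-- Size (length) of a regular expression. -/
def RE.size : RE P V → ℕ
  | .prop _ => 1
  | .test ψ => 1 + ψ.size
  | .plus r₀ r₁ => 1 + r₀.size + r₁.size
  | .comp r₀ r₁ => 1 + r₀.size + r₁.size
  | .star r => 1 + r.size
end

mutual
/-- Variables parameterizing diamond operators. -/
def Frm.dvars [DecidableEq V] : Frm P V → Finset V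
  | .pos _ => ∅
  | .neg _ => ∅
  | .colp => ∅
  | .colnp => ∅
  | .and φ ψ => φ.dvars ∪ ψ.dvars
  | .or φ ψ => φ.dvars ∪ ψ.dvars
  | .dia r ψ => r.dvars ∪ ψ.dvars
  | .box r ψ => r.dvars ∪ ψ.dvars
  | .diaLe r z ψ => insert z (r.dvars ∪ ψ.dvars)
  | .boxLe r _ ψ => r.dvars ∪ ψ.dvars
  | .diaCp r ψ => r.dvars ∪ ψ.dvars
  | .boxCp r ψ => r.dvars ∪ ψ.dvars
def RE.dvars [DecidableEq V] : RE P V → Finset V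
  | .prop _ => ∅
  | .test ψ => ψ.dvars
  | .plus r₀ r₁ => r₀.dvars ∪ r₁.dvars
  | .comp r₀ r₁ => r₀.dvars ∪ r₁.dvars
  | .star r => r.dvars
end

mutual
/-- Variables parameterizing box operators. -/
def Frm.bvars [DecidableEq V] : Frm P V → Finset V
  | .pos _ => ∅
  | .neg _ => ∅
  | .colp => ∅
  | .colnp => ∅
  | .and φ ψ => φ.bvars ∪ ψ.bvars
  | .or φ ψ => φ.bvars ∪ ψ.bvars
  | .dia r ψ => r.bvars ∪ ψ.bvars
  | .box r ψ => r.bvars ∪ ψ.bvars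
  | .diaLe r _ ψ => r.bvars ∪ ψ.bvars
  | .boxLe r z ψ => insert z (r.bvars ∪ ψ.bvars)
  | .diaCp r ψ => r.bvars ∪ ψ.bvars
  | .boxCp r ψ => r.bvars ∪ ψ.bvars
def RE.bvars [DecidableEq V] : RE P V → Finset V
  | .prop _ => ∅
  | .test ψ => ψ.bvars
  | .plus r₀ r₁ => r₀.bvars ∪ r₁.bvars
  | .comp r₀ r₁ => r₀.bvars ∪ r₁.bvars
  | .star r => r.bvars
end

mutual
/-- The formula contains no changepoint-bounded operators. -/
def Frm.noCp : Frm P V → Prop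
  | .pos _ => True
  | .neg _ => True
  | .colp => True
  | .colnp => True
  | .and φ ψ => φ.noCp ∧ ψ.noCp
  | .or φ ψ => φ.noCp ∧ ψ.noCp
  | .dia r ψ => r.noCp ∧ ψ.noCp
  | .box r ψ => r.noCp ∧ ψ.noCp
  | .diaLe r _ ψ => r.noCp ∧ ψ.noCp
  | .boxLe r _ ψ => r.noCp ∧ ψ.noCp
  | .diaCp _ _ => False
  | .boxCp _ _ => False
def RE.noCp : RE P V → Prop
  | .prop _ => True
  | .test ψ => ψ.noCp
  | .plus r₀ r₁ => r₀.noCp ∧ r₁.noCp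
  | .comp r₀ r₁ => r₀.noCp ∧ r₁.noCp
  | .star r => r.noCp
end

mutual
/-- The formula does not mention the fresh coloring proposition `p`. -/
def Frm.noCol : Frm P V → Prop
  | .pos _ => True
  | .neg _ => True
  | .colp => False
  | .colnp => False
  | .and φ ψ => φ.noCol ∧ ψ.noCol
  | .or φ ψ => φ.noCol ∧ ψ.noCol
  | .dia r ψ => r.noCol ∧ ψ.noCol
  | .box r ψ => r.noCol ∧ ψ.noCol
  | .diaLe r _ ψ => r.noCol ∧ ψ.noCol
  | .boxLe r _ ψ => r.noCol ∧ ψ.noCol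
  | .diaCp r ψ => r.noCol ∧ ψ.noCol
  | .boxCp r ψ => r.noCol ∧ ψ.noCol
def RE.noCol : RE P V → Prop
  | .prop _ => True
  | .test ψ => ψ.noCol
  | .plus r₀ r₁ => r₀.noCol ∧ r₁.noCol
  | .comp r₀ r₁ => r₀.noCol ∧ r₁.noCol
  | .star r => r.noCol
end

/-- A genuine PLDL formula: no changepoint-bounded operators and no
occurrence of the fresh proposition `p`. -/
def IsPLDL (φ : Frm P V) : Prop := φ.noCp ∧ φ.noCol

/-- Well-formedness: no variable parameterizes both a diamond and a box. -/
def WellFormed [DecidableEq V] (φ : Frm P V) : Prop :=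
  ∀ z, z ∈ φ.dvars → z ∉ φ.bvars

/-- Dualization: the negation of a formula, pushing negations to atoms. -/
def Frm.not : Frm P V → Frm P V
  | .pos p => .neg p
  | .neg p => .pos p
  | .colp => .colnp
  | .colnp => .colp
  | .and φ ψ => .or φ.not ψ.not
  | .or φ ψ => .and φ.not ψ.not
  | .dia r ψ => .box r ψ.not
  | .box r ψ => .dia r ψ.not
  | .diaLe r z ψ => .boxLe r z ψ.not
  | .boxLe r z ψ => .diaLe r z ψ.not
  | .diaCp r ψ => .boxCp r ψ.not
  | .boxCp r ψ => .diaCp r ψ.not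

mutual
/-- `rel φ`: replace every parameterized operator by the corresponding
changepoint-bounded operator. -/
def Frm.rel : Frm P V → Frm P V
  | .pos p => .pos p
  | .neg p => .neg p
  | .colp => .colp
  | .colnp => .colnp
  | .and φ ψ => .and φ.rel ψ.rel
  | .or φ ψ => .or φ.rel ψ.rel
  | .dia r ψ => .dia r.rel ψ.rel
  | .box r ψ => .box r.rel ψ.rel
  | .diaLe r _ ψ => .diaCp r.rel ψ.rel
  | .boxLe r _ ψ => .boxCp r.rel ψ.rel
  | .diaCp r ψ => .diaCp r.rel ψ.rel
  | .boxCp r ψ => .boxCp r.rel ψ.rel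
def RE.rel : RE P V → RE P V
  | .prop φ => .prop φ
  | .test ψ => .test ψ.rel
  | .plus r₀ r₁ => .plus r₀.rel r₁.rel
  | .comp r₀ r₁ => .comp r₀.rel r₁.rel
  | .star r => .star r.rel
end

/-- `θ_∞p = [tt*]⟨tt*⟩p`: the fresh proposition `p` holds infinitely often. -/
def thetaInfP : Frm P V := .box (.star (.prop .tru)) (.dia (.star (.prop .tru)) .colp)

/-- `θ_∞¬p`. -/
def thetaInfNP : Frm P V := .box (.star (.prop .tru)) (.dia (.star (.prop .tru)) .colnp)

/-- `c(φ) = rel(φ) ∧ θ_∞p ∧ θ_∞¬p`. -/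
def cFrm (φ : Frm P V) : Frm P V := .and φ.rel (.and thetaInfP thetaInfNP)

/-- `[i, j)` is a block of the coloring `c`: `i` and `j` are consecutive
changepoints. -/
def IsBlock (c : ℕ → Prop) (i j : ℕ) : Prop :=
  i < j ∧ Changepoint c i ∧ Changepoint c j ∧
    ∀ m, i < m → m < j → ¬ Changepoint c m

/-- Infinitely many changepoints. -/
def InfCP (c : ℕ → Prop) : Prop := ∀ N, ∃ n, N < n ∧ Changepoint c n

/-- Every block has length at most `k` (and there are infinitely many
changepoints). -/
def kBounded (c : ℕ → Prop) (k : ℕ) : Prop :=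
  InfCP c ∧ ∀ i j, IsBlock c i j → j - i ≤ k

/-- Infinitely many changepoints and every block has length at least `k`. -/
def kSpaced (c : ℕ → Prop) (k : ℕ) : Prop :=
  InfCP c ∧ ∀ i j, IsBlock c i j → k ≤ j - i

/-- A transducer implementing a finite-state strategy of Player O: it reads
inputs in `2^I` and outputs subsets of `O ∪ {p}` (the `O`-part `outO` and the
fresh proposition `p` via `outP`). -/
structure Transducer (Q I O : Type) where
  init : Q
  trans : Q → (I → Prop) → Q
  outO : Q → (O → Prop)
  outP : Q → Prop

/-- The state after reading `i₀ ⋯ i_n`. -/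
def Transducer.run {Q I O : Type} (T : Transducer Q I O)
    (i : ℕ → I → Prop) : ℕ → Q
  | 0 => T.trans T.init (i 0)
  | n + 1 => T.trans (T.run i n) (i (n + 1))

/-- The outcome word (over `2^(I ∪ O)`) consistent with the strategy
implemented by `T` against input sequence `i`. -/
def Transducer.word {Q I O : Type} (T : Transducer Q I O)
    (i : ℕ → I → Prop) (n : ℕ) : (I ⊕ O) → Prop :=
  fun a => a.elim (i n) (T.outO (T.run i n))

/-- The `p`-coloring of the outcome. -/
def Transducer.color {Q I O : Type} (T : Transducer Q I O)
    (i : ℕ → I → Prop) (n : ℕ) : Prop :=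
  T.outP (T.run i n)

/-!
A block longer than `|Q| + 1` contains two positions with the same transducer state. Feeding
the inputs read between them in a loop forever gives another consistent outcome whose colour is
constant from then on, so it has only finitely many changepoints, contradicting `θ_∞p ∧ θ_∞¬p`.
-/

open Filter

section Coloring

variable {c : ℕ → Prop}

theorem iff_of_forall_not_changepoint {x y : ℕ} (hxy : x ≤ y)
    (h : ∀ m, x < m → m ≤ y → ¬ Changepoint c m) : c y ↔ c x := by
  induction y, hxy using Nat.le_induction with
  | base => rfl
  | succ y hxy ih =>
    have hstep : c y ↔ c (y + 1) := by
      by_contra hne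
      exact h (y + 1) (by omega) le_rfl (Or.inr hne)
    exact hstep.symm.trans (ih fun m hm hmy => h m hm (by omega))

theorem IsBlock.iff_of_mem {a b m : ℕ} (hab : IsBlock c a b) (ham : a ≤ m) (hmb : m < b) :
    c m ↔ c a :=
  iff_of_forall_not_changepoint ham fun k hak hkm => hab.2.2.2 k hak (by omega)

theorem infCP_of_frequently (hp : ∃ᶠ n in atTop, c n) (hnp : ∃ᶠ n in atTop, ¬ c n) :
    InfCP c := by
  intro N
  obtain ⟨m, hNm, hm⟩ := frequently_atTop.mp hp (N + 1)
  obtain ⟨m', hmm', hm'⟩ := frequently_atTop.mp hnp m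
  by_contra! hnone
  have := iff_of_forall_not_changepoint hmm' fun k hmk _ hk => (hnone k (by omega)).elim hk
  exact hm' (this.mpr hm)

theorem not_infCP_of_forall_iff {N : ℕ} {p : Prop} (h : ∀ n, N ≤ n → (c n ↔ p)) :
    ¬ InfCP c := by
  intro hinf
  obtain ⟨n, hNn, hcp | hne⟩ := hinf N
  · omega
  · exact hne ((h (n - 1) (by omega)).trans (h n hNn.le).symm)

end Coloring

section Semantics

variable (w : ℕ → P → Prop) (c : ℕ → Prop) (α : V → ℕ)

theorem match_star_tru (m j : ℕ) : Match w c α (.star (.prop .tru)) m (m + j) :=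
  ⟨j, (m + ·), rfl, rfl, fun _ _ => ⟨rfl, trivial⟩⟩

theorem frequently_of_sat_box_dia {ψ : Frm P V}
    (h : Sat w c α (.box (.star (.prop .tru)) (.dia (.star (.prop .tru)) ψ)) 0) :
    ∃ᶠ n in atTop, Sat w c α ψ n := by
  refine frequently_atTop.mpr fun n => ?_
  obtain ⟨j, -, hj⟩ := h n (by simpa using match_star_tru w c α 0 n)
  exact ⟨n + j, by omega, by simpa using hj⟩

theorem infCP_of_sat_cFrm {φ : Frm P V} (h : Sat w c α (cFrm φ) 0) : InfCP c :=
  infCP_of_frequently (frequently_of_sat_box_dia w c α h.2.1)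
    (frequently_of_sat_box_dia w c α h.2.2)

end Semantics

/-- The index sequence `0, 1, …, m₂, m₁ + 1, …, m₂, m₁ + 1, …, m₂, …`. -/
def loopIndex (m₁ m₂ : ℕ) : ℕ → ℕ
  | 0 => 0
  | n + 1 => if loopIndex m₁ m₂ n = m₂ then m₁ + 1 else loopIndex m₁ m₂ n + 1

theorem loopIndex_le {m₁ m₂ : ℕ} (h : m₁ < m₂) (n : ℕ) : loopIndex m₁ m₂ n ≤ m₂ := by
  induction n with
  | zero => exact Nat.zero_le _
  | succ n ih =>
    simp only [loopIndex]
    split_ifs with hn <;> omega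

theorem min_le_loopIndex (m₁ m₂ n : ℕ) : min n (m₁ + 1) ≤ loopIndex m₁ m₂ n := by
  induction n with
  | zero => exact Nat.zero_le _
  | succ n ih =>
    simp only [loopIndex]
    split_ifs with hn <;> omega

namespace Transducer

variable {Q I O : Type} (T : Transducer Q I O) (i : ℕ → I → Prop)

theorem run_loopIndex {m₁ m₂ : ℕ} (h : T.run i m₁ = T.run i m₂) (n : ℕ) :
    T.run (i ∘ loopIndex m₁ m₂) n = T.run i (loopIndex m₁ m₂ n) := by
  induction n with
  | zero => rfl
  | succ n ih =>
    simp only [run, ih, Function.comp_apply, loopIndex]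
    split_ifs with hn
    · rw [hn, ← h]; rfl
    · rfl

theorem exists_run_eq [Fintype Q] (a : ℕ) :
    ∃ m₁ m₂, a ≤ m₁ ∧ m₁ < m₂ ∧ m₂ ≤ a + Fintype.card Q ∧ T.run i m₁ = T.run i m₂ := by
  have hcard : (Finset.univ : Finset Q).card < (Finset.Icc a (a + Fintype.card Q)).card := by
    simp only [Finset.card_univ, Nat.card_Icc]
    omega
  obtain ⟨x, hx, y, hy, hxy, heq⟩ :=
    Finset.exists_ne_map_eq_of_card_lt_of_maps_to hcard (f := T.run i)
      fun _ _ => Finset.mem_coe.mpr (Finset.mem_univ _)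
  rw [Finset.mem_Icc] at hx hy
  rcases lt_or_gt_of_ne hxy with hlt | hlt
  · exact ⟨x, y, hx.1, hlt, hy.2, heq⟩
  · exact ⟨y, x, hy.1, hlt, hx.2, heq.symm⟩

end Transducer

/-- if a finite-state strategy with `n` states realizes `c(φ)`,
then every consistent outcome is `(n+1)`-bounded. -/
theorem finite_state_bounded {Q I O V : Type} [Fintype Q] [DecidableEq V]
    (T : Transducer Q I O) (φ : Frm (I ⊕ O) V)
    (hφ : IsPLDL φ) (hd : φ.bvars = ∅)
    (hreal : ∀ i : ℕ → I → Prop,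
      Sat (T.word i) (T.color i) (fun _ => 0) (cFrm φ) 0) :
    ∀ i : ℕ → I → Prop, kBounded (T.color i) (Fintype.card Q + 1) := by
  intro i
  refine ⟨infCP_of_sat_cFrm _ _ _ (hreal i), fun a b hab => ?_⟩
  by_contra! hlong
  obtain ⟨m₁, m₂, ham₁, hm₁₂, hm₂, hrun⟩ := T.exists_run_eq i a
  have hconst : ∀ n, m₁ + 1 ≤ n → (T.color (i ∘ loopIndex m₁ m₂) n ↔ T.color i a) := by
    intro n hn
    have hlo := min_le_loopIndex m₁ m₂ n
    have hhi := loopIndex_le hm₁₂ n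
    simp only [Transducer.color, T.run_loopIndex i hrun]
    exact hab.iff_of_mem (by omega) (by omega)
  exact not_infCP_of_forall_iff hconst (infCP_of_sat_cFrm _ _ _ (hreal _))

end PLDLPaper
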